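/- Let (f_n) be a sequence of measurable real-valued functions on a measure space (X, Σ, λ). The following are equivalent: (I) (f_n) is statistically almost uniformly Cauchy; (II) there exists B ⊆ ℕ with d(B) = 1 such that (f_n)_{n∈B} is almost uniformly Cauchy; (III) there exists B ⊆ ℕ with d(B) = 1 and a measurable f such that (f_n)_{n∈B} converges almost uniformly to f; (IV) there exists a measurable f such that (f_n) converges statistically almost uniformly to f. -/

import Mathlib

open Filter MeasureTheory
open scoped Classical ENNReal

/-- `dens A c`: the set `A ⊆ ℕ` has natural density `c`. -/
def dens (A : Set ℕ) (c : ℝ) : Prop :=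
  Tendsto (fun n : ℕ => (((Finset.range n).filter (fun k => k ∈ A)).card : ℝ) / n)
    atTop (nhds c)

/-- Statistical convergence of a real sequence. -/
def StatTendsto (a : ℕ → ℝ) (l : ℝ) : Prop :=
  ∀ ε > 0, dens {n | ε ≤ |a n - l|} 0

/-- A sequence is measurable in the sense of Fast if the densities of the sets
`{n : a n < x}` exist outside an at most countable set of `x`'s. -/
def FastMeasurable (a : ℕ → ℝ) : Prop :=
  ∃ S : Set ℝ, S.Countable ∧ ∀ x ∉ S, ∃ c, dens {n | a n < x} c

/-- `supDist f g D`: the (extended-real) supremum of `|f x - g x|` over `x ∉ D`. -/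
noncomputable def supDist {X : Type*} (f g : X → ℝ) (D : Set X) : ℝ≥0∞ :=
  ⨆ x ∈ Dᶜ, ENNReal.ofReal |f x - g x|

/-- `(f n)` is statistically almost uniformly Cauchy. -/
def StatAUCauchy {X : Type*} [MeasurableSpace X] (μ : MeasureTheory.Measure X)
    (f : ℕ → X → ℝ) : Prop :=
  ∀ ε > (0 : ℝ), ∃ D : Set X, MeasurableSet D ∧ μ D < ENNReal.ofReal ε ∧
    ∀ ε' > (0 : ℝ), ∃ n₀ : ℕ,
      dens {n | ENNReal.ofReal ε' ≤ supDist (f n) (f n₀) D} 0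

/-- `(f n)` converges statistically almost uniformly to `g`. -/
def StatAUTendsto {X : Type*} [MeasurableSpace X] (μ : MeasureTheory.Measure X)
    (f : ℕ → X → ℝ) (g : X → ℝ) : Prop :=
  ∀ ε > (0 : ℝ), ∃ D : Set X, MeasurableSet D ∧ μ D < ENNReal.ofReal ε ∧
    ∀ ε' > (0 : ℝ), dens {n | ENNReal.ofReal ε' ≤ supDist (f n) g D} 0

/-!
Sets of natural density zero form a P-ideal: countably many of them are all contained, up to
finite sets, in a single set of density zero. Applied to the exceptional index sets of the
statistical Cauchy condition, one for each pair of tolerances, this yields one index set `B` of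
density one along which `(f n)` is almost uniformly Cauchy. Along `B` the sequence then has a
pointwise limit off each exceptional set `D`, and it converges to it uniformly there; the
remaining implications are triangle inequalities for the uniform distance off `D`.
-/

section Density

open Nat

-- Naming the count pins its classical decidability instance, so `densCount Aᶜ` is literally the
-- count inside `dens Aᶜ` (an inline `count (· ∈ Aᶜ)` would pick up `Set.decidableCompl`).
noncomputable def densCount (A : Set ℕ) (n : ℕ) : ℕ := count (· ∈ A) n

lemma dens_iff_densCount {A : Set ℕ} {c : ℝ} :
    dens A c ↔ Tendsto (fun n : ℕ => (densCount A n : ℝ) / n) atTop (nhds c) := by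
  simp only [dens, densCount, count_eq_card_filter_range]

lemma dens_unique {A : Set ℕ} {c c' : ℝ} (h : dens A c) (h' : dens A c') : c = c' :=
  tendsto_nhds_unique h h'

lemma densCount_add_densCount_compl (A : Set ℕ) (n : ℕ) :
    densCount A n + densCount Aᶜ n = n := by
  simp only [densCount, count_eq_card_filter_range, Set.mem_compl_iff]
  simpa using Finset.card_filter_add_card_filter_not (s := Finset.range n) (· ∈ A)

lemma densCount_union_le (A B : Set ℕ) (n : ℕ) :
    densCount (A ∪ B) n ≤ densCount A n + densCount B n := by
  simp only [densCount, count_eq_card_filter_range]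
  refine (Finset.card_le_card fun k hk => ?_).trans (Finset.card_union_le _ _)
  simp only [Finset.mem_union, Finset.mem_filter, Set.mem_union] at hk ⊢
  tauto

lemma dens.compl {A : Set ℕ} {c : ℝ} (h : dens A c) : dens Aᶜ (1 - c) := by
  rw [dens_iff_densCount] at h ⊢
  refine (tendsto_const_nhds.sub h).congr' ?_
  filter_upwards [eventually_ne_atTop 0] with n hn
  have hsum : (densCount A n : ℝ) + densCount Aᶜ n = n := by
    exact_mod_cast densCount_add_densCount_compl A n
  field_simp
  linarith

lemma dens_zero_iff {A : Set ℕ} :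
    dens A 0 ↔ ∀ δ > 0, ∀ᶠ n in atTop, (densCount A n : ℝ) ≤ δ * n := by
  rw [dens_iff_densCount]
  constructor
  · intro h δ hδ
    filter_upwards [(tendsto_order.1 h).2 δ hδ, eventually_gt_atTop 0] with n hn hn0
    exact ((div_lt_iff₀ (by positivity)).1 hn).le
  · intro h
    refine tendsto_order.2 ⟨fun a ha => Eventually.of_forall fun n => ha.trans_le (by positivity),
      fun a ha => ?_⟩
    filter_upwards [h (a / 2) (half_pos ha), eventually_gt_atTop 0] with n hn hn0
    rw [div_lt_iff₀ (by exact_mod_cast hn0)]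
    calc (densCount A n : ℝ) ≤ a / 2 * n := hn
      _ < a * n := by gcongr; exact half_lt_self ha

lemma dens_zero_of_subset {A B : Set ℕ} (h : A ⊆ B) (hB : dens B 0) : dens A 0 := by
  rw [dens_zero_iff] at hB ⊢
  refine fun δ hδ => (hB δ hδ).mono fun n hn => le_trans ?_ hn
  exact_mod_cast count_mono_left fun k _ hk => h hk

lemma dens_zero_union {A B : Set ℕ} (hA : dens A 0) (hB : dens B 0) : dens (A ∪ B) 0 := by
  rw [dens_zero_iff] at hA hB ⊢
  intro δ hδ
  filter_upwards [hA (δ / 2) (half_pos hδ), hB (δ / 2) (half_pos hδ)] with n hnA hnB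
  calc (densCount (A ∪ B) n : ℝ) ≤ densCount A n + densCount B n := by
        exact_mod_cast densCount_union_le A B n
    _ ≤ δ / 2 * n + δ / 2 * n := add_le_add hnA hnB
    _ = δ * n := by ring

lemma Set.Finite.dens_zero {A : Set ℕ} (h : A.Finite) : dens A 0 := by
  rw [dens_iff_densCount]
  refine squeeze_zero (fun n => by positivity) (fun n => ?_)
    (tendsto_const_div_atTop_nhds_zero_nat (h.toFinset.card : ℝ))
  gcongr
  exact_mod_cast count_le_card (p := (· ∈ A)) h n

lemma dens.infinite {A : Set ℕ} {c : ℝ} (h : dens A c) (hc : c ≠ 0) : A.Infinite :=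
  fun hA => hc (dens_unique h hA.dens_zero)

lemma exists_dens_zero_diff_finite_of_monotone {Z : ℕ → Set ℕ} (hZ : Monotone Z)
    (hZ0 : ∀ m, dens (Z m) 0) : ∃ Y, dens Y 0 ∧ ∀ m, (Z m \ Y).Finite := by
  have hthreshold m : ∃ N, ∀ k ≥ N, ∀ n ≥ k, (densCount (Z m) n : ℝ) ≤ 1 / (m + 1) * n := by
    obtain ⟨N, hN⟩ := eventually_atTop.1 (dens_zero_iff.1 (hZ0 m) (1 / (m + 1)) (by positivity))
    exact ⟨N, fun k hk n hn => hN n (hk.trans hn)⟩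
  obtain ⟨N, hNmono, hN⟩ := extraction_forall_of_eventually' hthreshold
  set Y := {n | ∃ m, N m ≤ n ∧ n ∈ Z m}
  refine ⟨Y, ?_, fun m => (Set.finite_lt_nat (N m)).subset
    fun n ⟨hn, hnY⟩ => not_le.1 fun hle => hnY ⟨m, hle, hn⟩⟩
  rw [dens_zero_iff]
  intro δ hδ
  obtain ⟨m, hm⟩ := exists_nat_one_div_lt hδ
  filter_upwards [eventually_ge_atTop (N m)] with n hn
  -- Below `n`, `Y` lies inside `Z m'` for the last threshold `N m' ≤ n`, and `m' ≥ m`.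
  set m' := Nat.findGreatest (fun j => N j ≤ n) n
  have hmax : ∀ j, N j ≤ n → j ≤ m' := fun j hj =>
    Nat.le_findGreatest ((hNmono.id_le j).trans hj) hj
  have hNm' : N m' ≤ n :=
    Nat.findGreatest_spec (P := fun j => N j ≤ n) ((hNmono.id_le m).trans hn) hn
  have hcount : densCount Y n ≤ densCount (Z m') n :=
    count_mono_left fun k hk ⟨j, hjk, hkj⟩ => hZ (hmax j (hjk.trans hk.le)) hkj
  calc (densCount Y n : ℝ) ≤ densCount (Z m') n := by
        exact_mod_cast hcount
    _ ≤ 1 / (m' + 1) * n := hN m' n hNm'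
    _ ≤ 1 / (m + 1) * n := by gcongr; exact_mod_cast hmax m hn
    _ ≤ δ * n := by gcongr

lemma exists_dens_zero_diff_finite {ι : Type*} [Countable ι] (Z : ι → Set ℕ)
    (hZ0 : ∀ i, dens (Z i) 0) : ∃ Y, dens Y 0 ∧ ∀ i, (Z i \ Y).Finite := by
  cases isEmpty_or_nonempty ι
  · exact ⟨∅, Set.finite_empty.dens_zero, isEmptyElim⟩
  obtain ⟨e, he⟩ := exists_surjective_nat ι
  have hacc m : dens (Set.accumulate (Z ∘ e) m) 0 := by
    induction m with
    | zero => simpa using hZ0 (e 0)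
    | succ m ih => rw [Set.accumulate_succ]; exact dens_zero_union ih (hZ0 _)
  obtain ⟨Y, hY, hfin⟩ := exists_dens_zero_diff_finite_of_monotone Set.monotone_accumulate hacc
  refine ⟨Y, hY, fun i => ?_⟩
  obtain ⟨m, rfl⟩ := he i
  exact (hfin m).subset (Set.sdiff_subset_sdiff_left (Set.subset_accumulate (s := Z ∘ e)))

end Density

lemma eventually_atTop_inf_principal_iff {B : Set ℕ} {p : ℕ → Prop} :
    (∀ᶠ n in atTop ⊓ 𝓟 B, p n) ↔ ∃ N, ∀ n ∈ B, N ≤ n → p n := by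
  simp only [(atTop_basis.inf_principal B).eventually_iff, Set.mem_inter_iff, Set.mem_Ici,
    true_and]
  exact exists_congr fun N => ⟨fun h n hn hNn => h ⟨hNn, hn⟩, fun h n hn => h n hn.2 hn.1⟩

lemma eventually_atTop_inf_principal_prod_iff {B : Set ℕ} {r : ℕ → ℕ → Prop} :
    (∀ᶠ q in (atTop ⊓ 𝓟 B) ×ˢ (atTop ⊓ 𝓟 B), r q.1 q.2) ↔
      ∃ N, ∀ m ∈ B, ∀ n ∈ B, N ≤ m → N ≤ n → r m n := by
  simp only [(atTop_basis.inf_principal B).prod_self.eventually_iff, Set.mem_prod,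
    Set.mem_inter_iff, Set.mem_Ici, true_and]
  exact exists_congr fun N => ⟨fun h m hm n hn hNm hNn => @h (m, n) ⟨⟨hNm, hm⟩, hNn, hn⟩,
    fun h q hq => h q.1 hq.1.2 q.2 hq.2.2 hq.1.1 hq.2.1⟩

section SupDist

variable {X : Type*} {f g h : X → ℝ} {D : Set X}

lemma ofReal_abs_sub_le_supDist {x : X} (hx : x ∈ Dᶜ) :
    ENNReal.ofReal |f x - g x| ≤ supDist f g D :=
  le_iSup₂ (f := fun x (_ : x ∈ Dᶜ) => ENNReal.ofReal |f x - g x|) x hx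

lemma abs_sub_lt_of_supDist_lt {x : X} {ε : ℝ} (hx : x ∈ Dᶜ)
    (h : supDist f g D < ENNReal.ofReal ε) : |f x - g x| < ε :=
  (ENNReal.ofReal_lt_ofReal_iff'.1 ((ofReal_abs_sub_le_supDist hx).trans_lt h)).1

lemma supDist_le_ofReal {a : ℝ} (h : ∀ x ∈ Dᶜ, |f x - g x| ≤ a) :
    supDist f g D ≤ ENNReal.ofReal a :=
  iSup₂_le fun x hx => ENNReal.ofReal_le_ofReal (h x hx)

lemma supDist_comm (f g : X → ℝ) (D : Set X) : supDist f g D = supDist g f D := by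
  simp only [supDist, abs_sub_comm]

lemma supDist_triangle (f g h : X → ℝ) (D : Set X) :
    supDist f h D ≤ supDist f g D + supDist g h D := by
  refine iSup₂_le fun x hx => ?_
  calc ENNReal.ofReal |f x - h x|
      ≤ ENNReal.ofReal (|f x - g x| + |g x - h x|) :=
        ENNReal.ofReal_le_ofReal (abs_sub_le _ _ _)
    _ = ENNReal.ofReal |f x - g x| + ENNReal.ofReal |g x - h x| :=
        ENNReal.ofReal_add (abs_nonneg _) (abs_nonneg _)
    _ ≤ supDist f g D + supDist g h D :=
        add_le_add (ofReal_abs_sub_le_supDist hx) (ofReal_abs_sub_le_supDist hx)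

lemma supDist_lt_of_lt_half {ε : ℝ} (hf : supDist f h D < ENNReal.ofReal (ε / 2))
    (hg : supDist g h D < ENNReal.ofReal (ε / 2)) : supDist f g D < ENNReal.ofReal ε := by
  have hε : 0 < ε / 2 := ENNReal.ofReal_pos.1 (pos_of_gt hf)
  calc supDist f g D ≤ supDist f h D + supDist h g D := supDist_triangle f h g D
    _ < ENNReal.ofReal (ε / 2) + ENNReal.ofReal (ε / 2) :=
        ENNReal.add_lt_add hf (supDist_comm h g D ▸ hg)
    _ = ENNReal.ofReal ε := by rw [← ENNReal.ofReal_add hε.le hε.le, add_halves]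

lemma uniformCauchySeqOn_compl_of_supDist {ι : Type*} {l : Filter ι} {F : ι → X → ℝ}
    (h : ∀ ε > 0, ∀ᶠ q in l ×ˢ l, supDist (F q.1) (F q.2) D < ENNReal.ofReal ε) :
    UniformCauchySeqOn F l Dᶜ := by
  intro u hu
  obtain ⟨ε, hε, hεu⟩ := Metric.mem_uniformity_dist.1 hu
  exact (h ε hε).mono fun q hq x hx => hεu (abs_sub_lt_of_supDist_lt hx hq)

lemma TendstoUniformlyOn.eventually_supDist_lt {ι : Type*} {l : Filter ι} {F : ι → X → ℝ}
    (h : TendstoUniformlyOn F g l Dᶜ) {ε : ℝ} (hε : 0 < ε) :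
    ∀ᶠ i in l, supDist (F i) g D < ENNReal.ofReal ε := by
  filter_upwards [Metric.tendstoUniformlyOn_iff.1 h (ε / 2) (half_pos hε)] with i hi
  calc supDist (F i) g D ≤ ENNReal.ofReal (ε / 2) :=
        supDist_le_ofReal fun x hx => by rw [abs_sub_comm]; exact (hi x hx).le
    _ < ENNReal.ofReal ε := (ENNReal.ofReal_lt_ofReal_iff hε).2 (half_lt_self hε)

end SupDist

section AlmostUniform

variable {X : Type*} [MeasurableSpace X] {μ : Measure X} {f : ℕ → X → ℝ} {g : X → ℝ}
  {B : Set ℕ}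

def AUCauchyOn (μ : Measure X) (f : ℕ → X → ℝ) (B : Set ℕ) : Prop :=
  ∀ ε > (0 : ℝ), ∃ D : Set X, MeasurableSet D ∧ μ D < ENNReal.ofReal ε ∧
    ∀ ε' > (0 : ℝ), ∃ N : ℕ, ∀ m ∈ B, ∀ n ∈ B, N ≤ m → N ≤ n →
      supDist (f m) (f n) D < ENNReal.ofReal ε'

def AUTendstoOn (μ : Measure X) (f : ℕ → X → ℝ) (g : X → ℝ) (B : Set ℕ) : Prop :=
  ∀ ε > (0 : ℝ), ∃ D : Set X, MeasurableSet D ∧ μ D < ENNReal.ofReal ε ∧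
    ∀ ε' > (0 : ℝ), ∃ N : ℕ, ∀ n ∈ B, N ≤ n → supDist (f n) g D < ENNReal.ofReal ε'

theorem StatAUCauchy.exists_auCauchyOn (h : StatAUCauchy μ f) :
    ∃ B, dens B 1 ∧ AUCauchyOn μ f B := by
  choose D hDm hDμ hD using fun k : ℕ => h (1 / (k + 1)) (by positivity)
  choose c hc using fun kj : ℕ × ℕ => hD kj.1 (1 / (kj.2 + 1)) (by positivity)
  obtain ⟨Y, hY, hYfin⟩ := exists_dens_zero_diff_finite _ hc
  refine ⟨Yᶜ, by simpa using hY.compl, fun ε hε => ?_⟩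
  obtain ⟨k, hk⟩ := exists_nat_one_div_lt hε
  refine ⟨D k, hDm k, (hDμ k).trans_le (ENNReal.ofReal_le_ofReal hk.le), fun ε' hε' => ?_⟩
  obtain ⟨j, hj⟩ := exists_nat_one_div_lt (half_pos hε')
  obtain ⟨N, hN⟩ := (hYfin (k, j)).bddAbove
  have hclose : ∀ n ∈ Yᶜ, N < n →
      supDist (f n) (f (c (k, j))) (D k) < ENNReal.ofReal (ε' / 2) := fun n hnY hNn =>
    (not_le.1 fun hle => hNn.not_ge (hN ⟨hle, hnY⟩)).trans_le (ENNReal.ofReal_le_ofReal hj.le)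
  exact ⟨N + 1, fun m hm n hn hNm hNn => supDist_lt_of_lt_half (hclose m hm hNm) (hclose n hn hNn)⟩

theorem AUCauchyOn.exists_auTendstoOn (hf : ∀ n, Measurable (f n)) (hB : B.Infinite)
    (h : AUCauchyOn μ f B) : ∃ g, Measurable g ∧ AUTendstoOn μ f g B := by
  have : (atTop ⊓ 𝓟 B).NeBot := frequently_iff_neBot.1 (Nat.frequently_atTop_iff_infinite.2 hB)
  choose D hDm hDμ hD using fun k : ℕ => h (1 / (k + 1)) (by positivity)
  have hcauchy k : UniformCauchySeqOn f (atTop ⊓ 𝓟 B) (D k)ᶜ :=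
    uniformCauchySeqOn_compl_of_supDist fun ε' hε' =>
      eventually_atTop_inf_principal_prod_iff.2 (hD k ε' hε')
  set g := fun x => limUnder (atTop ⊓ 𝓟 B) (f · x)
  have hg : Measurable g :=
    (StronglyMeasurable.limUnder fun n => (hf n).stronglyMeasurable).measurable
  have hlim k : TendstoUniformlyOn f g (atTop ⊓ 𝓟 B) (D k)ᶜ :=
    (hcauchy k).tendstoUniformlyOn_of_tendsto fun x hx =>
      tendsto_nhds_limUnder (cauchy_map_iff_exists_tendsto.1 ((hcauchy k).cauchy_map hx))
  refine ⟨g, hg, fun ε hε => ?_⟩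
  obtain ⟨k, hk⟩ := exists_nat_one_div_lt hε
  exact ⟨D k, hDm k, (hDμ k).trans_le (ENNReal.ofReal_le_ofReal hk.le), fun ε' hε' =>
    eventually_atTop_inf_principal_iff.1 ((hlim k).eventually_supDist_lt hε')⟩

theorem AUTendstoOn.statAUTendsto (hB : dens B 1) (h : AUTendstoOn μ f g B) :
    StatAUTendsto μ f g := by
  intro ε hε
  obtain ⟨D, hDm, hDμ, hD⟩ := h ε hε
  refine ⟨D, hDm, hDμ, fun ε' hε' => ?_⟩
  obtain ⟨N, hN⟩ := hD ε' hε'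
  refine dens_zero_of_subset (B := Bᶜ ∪ {n | n < N}) (fun n hn => ?_)
    (dens_zero_union (by simpa using hB.compl) (Set.finite_lt_nat N).dens_zero)
  exact or_iff_not_imp_left.2 fun hnB => not_le.1 fun hNn => (hN n (not_not.1 hnB) hNn).not_ge hn

theorem StatAUTendsto.statAUCauchy (h : StatAUTendsto μ f g) : StatAUCauchy μ f := by
  intro ε hε
  obtain ⟨D, hDm, hDμ, hD⟩ := h ε hε
  refine ⟨D, hDm, hDμ, fun ε' hε' => ?_⟩
  have hfar := hD (ε' / 2) (half_pos hε')
  obtain ⟨c, hc⟩ := ((by simpa using hfar.compl : dens _ 1).infinite one_ne_zero).nonempty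
  refine ⟨c, dens_zero_of_subset (fun n hn => ?_) hfar⟩
  by_contra hnot
  exact (supDist_lt_of_lt_half (not_le.1 hnot) (not_le.1 hc)).not_ge hn

end AlmostUniform

theorem statAUCauchy_tfae
    {X : Type*} [MeasurableSpace X] (μ : Measure X) (f : ℕ → X → ℝ)
    (hf : ∀ n, Measurable (f n)) :
    (StatAUCauchy μ f ↔
      (∃ B : Set ℕ, dens B 1 ∧
        ∀ ε > (0 : ℝ), ∃ D : Set X, MeasurableSet D ∧ μ D < ENNReal.ofReal ε ∧
          ∀ ε' > (0 : ℝ), ∃ N : ℕ, ∀ m ∈ B, ∀ n ∈ B, N ≤ m → N ≤ n →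
            supDist (f m) (f n) D < ENNReal.ofReal ε')) ∧
    (StatAUCauchy μ f ↔
      (∃ B : Set ℕ, dens B 1 ∧ ∃ g : X → ℝ, Measurable g ∧
        ∀ ε > (0 : ℝ), ∃ D : Set X, MeasurableSet D ∧ μ D < ENNReal.ofReal ε ∧
          ∀ ε' > (0 : ℝ), ∃ N : ℕ, ∀ n ∈ B, N ≤ n →
            supDist (f n) g D < ENNReal.ofReal ε')) ∧
    (StatAUCauchy μ f ↔
      (∃ g : X → ℝ, Measurable g ∧ StatAUTendsto μ f g)) := by
  have h12 : StatAUCauchy μ f → ∃ B, dens B 1 ∧ AUCauchyOn μ f B :=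
    StatAUCauchy.exists_auCauchyOn
  have h23 : (∃ B, dens B 1 ∧ AUCauchyOn μ f B) →
      ∃ B, dens B 1 ∧ ∃ g, Measurable g ∧ AUTendstoOn μ f g B :=
    fun ⟨B, hB, h⟩ => ⟨B, hB, h.exists_auTendstoOn hf (hB.infinite one_ne_zero)⟩
  have h34 : (∃ B, dens B 1 ∧ ∃ g, Measurable g ∧ AUTendstoOn μ f g B) →
      ∃ g, Measurable g ∧ StatAUTendsto μ f g :=
    fun ⟨_, hB, g, hg, h⟩ => ⟨g, hg, h.statAUTendsto hB⟩
  have h41 : (∃ g, Measurable g ∧ StatAUTendsto μ f g) → StatAUCauchy μ f :=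
    fun ⟨_, _, h⟩ => h.statAUCauchy
  exact ⟨⟨h12, h41 ∘ h34 ∘ h23⟩, ⟨h23 ∘ h12, h41 ∘ h34⟩, ⟨h34 ∘ h23 ∘ h12, h41⟩⟩
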